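/- arXiv:1312.5180 — 4 statements merged into one kernel-verified Lean document; each statement's English description precedes it below -/
import Mathlib

section
/- The disjoint union of p copies of K_{3,3} (a graph on n = 6p vertices) has exactly 3^(n/3) maximal induced matchings. -/
/-- An induced matching: a set of edges of `G`, pairwise disjoint, such that
no edge of `G` joins endpoints of two distinct edges of the matching. -/
def IsInducedMatching {V : Type*} (G : SimpleGraph V) (M : Finset (Sym2 V)) : Prop :=
  (∀ e ∈ M, e ∈ G.edgeSet) ∧
    ∀ e ∈ M, ∀ f ∈ M, e ≠ f → ∀ x ∈ e, ∀ y ∈ f, x ≠ y ∧ ¬ G.Adj x y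

/-- `M` covers the vertex `v` if `v` is an endpoint of an edge of `M`. -/
def MCovers {V : Type*} (M : Finset (Sym2 V)) (v : V) : Prop := ∃ e ∈ M, v ∈ e

/-- A maximal induced matching. -/
def IsMaximalInducedMatching {V : Type*} (G : SimpleGraph V) (M : Finset (Sym2 V)) : Prop :=
  IsInducedMatching G M ∧ ∀ M', IsInducedMatching G M' → M ⊆ M' → M' = M

/-- The number of maximal induced matchings of `G`. -/
noncomputable def mimCount {V : Type*} (G : SimpleGraph V) : ℕ :=
  {M : Finset (Sym2 V) | IsMaximalInducedMatching G M}.ncard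

/-- The disjoint union of `p` copies of `K_{3,3}`, on vertex set `Fin p × (Fin 3 ⊕ Fin 3)`. -/
def copiesK33 (p : ℕ) : SimpleGraph (Fin p × (Fin 3 ⊕ Fin 3)) where
  Adj a b := a.1 = b.1 ∧ (completeBipartiteGraph (Fin 3) (Fin 3)).Adj a.2 b.2
  symm := ⟨fun a b h => ⟨h.1.symm, (completeBipartiteGraph (Fin 3) (Fin 3)).adj_symm h.2⟩⟩
  loopless := ⟨fun a h => (completeBipartiteGraph (Fin 3) (Fin 3)).loopless.irrefl a.2 h.2⟩

/-!
In `K_{3,3}` any two distinct edges `a b` and `c d` are joined by the edge `a d`, so an induced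
matching of `copiesK33 p` contains at most one edge of each copy. Distinct copies are not
adjacent, so a maximal one contains exactly one edge of each copy, and every such choice is
maximal. Hence the maximal induced matchings are the `9 ^ p = 3 ^ (2 p)` choices of one edge
per copy.
-/

theorem IsInducedMatching.insert {V : Type*} [DecidableEq V] {G : SimpleGraph V}
    {M : Finset (Sym2 V)} {e : Sym2 V} (hM : IsInducedMatching G M) (he : e ∈ G.edgeSet)
    (hsep : ∀ f ∈ M, ∀ x ∈ e, ∀ y ∈ f, x ≠ y ∧ ¬ G.Adj x y) :
    IsInducedMatching G (insert e M) := by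
  refine ⟨fun f hf => ?_, fun f hf f' hf' hne x hx y hy => ?_⟩
  · rcases Finset.mem_insert.mp hf with rfl | hf
    exacts [he, hM.1 f hf]
  rcases Finset.mem_insert.mp hf with rfl | hfM <;> rcases Finset.mem_insert.mp hf' with rfl | hf'M
  · exact absurd rfl hne
  · exact hsep f' hf'M x hx y hy
  · obtain ⟨hyx, hadj⟩ := hsep f hfM y hy x hx
    exact ⟨hyx.symm, fun h => hadj h.symm⟩
  · exact hM.2 f hfM f' hf'M hne x hx y hy

namespace copiesK33

variable {p : ℕ}

def edge (i : Fin p) (ab : Fin 3 × Fin 3) : Sym2 (Fin p × (Fin 3 ⊕ Fin 3)) :=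
  s((i, Sum.inl ab.1), (i, Sum.inr ab.2))

theorem mem_edgeSet_iff {e : Sym2 (Fin p × (Fin 3 ⊕ Fin 3))} :
    e ∈ (copiesK33 p).edgeSet ↔ ∃ i ab, e = edge i ab := by
  induction e using Sym2.inductionOn with
  | hf x y =>
    obtain ⟨i, u⟩ := x
    obtain ⟨j, v⟩ := y
    simp only [SimpleGraph.mem_edgeSet]
    constructor
    · rintro ⟨rfl, hadj⟩
      rcases u with a | a <;> rcases v with b | b
      · simp [completeBipartiteGraph] at hadj
      · exact ⟨i, (a, b), rfl⟩
      · exact ⟨i, (b, a), Sym2.eq_swap⟩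
      · simp [completeBipartiteGraph] at hadj
    · rintro ⟨k, ⟨a, b⟩, h⟩
      rcases Sym2.eq_iff.mp h with ⟨h₁, h₂⟩ | ⟨h₁, h₂⟩ <;>
        simp only [Prod.mk.injEq] at h₁ h₂ <;>
        obtain ⟨rfl, rfl⟩ := h₁ <;> obtain ⟨rfl, rfl⟩ := h₂ <;>
        simp [copiesK33, completeBipartiteGraph]

theorem edge_mem_edgeSet (i : Fin p) (ab : Fin 3 × Fin 3) :
    edge i ab ∈ (copiesK33 p).edgeSet :=
  mem_edgeSet_iff.mpr ⟨i, ab, rfl⟩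

theorem edge_inj {i j : Fin p} {ab cd : Fin 3 × Fin 3} :
    edge i ab = edge j cd ↔ i = j ∧ ab = cd := by
  refine ⟨fun h => ?_, fun ⟨hij, hab⟩ => hij ▸ hab ▸ rfl⟩
  rcases Sym2.eq_iff.mp h with ⟨h₁, h₂⟩ | ⟨h₁, _⟩
  · simp only [Prod.mk.injEq, Sum.inl.injEq, Sum.inr.injEq] at h₁ h₂
    exact ⟨h₁.1, Prod.ext h₁.2 h₂.2⟩
  · simp at h₁

theorem fst_eq_of_mem_edge {i : Fin p} {ab : Fin 3 × Fin 3} {x : Fin p × (Fin 3 ⊕ Fin 3)}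
    (hx : x ∈ edge i ab) : x.1 = i := by
  rcases Sym2.mem_iff.mp hx with rfl | rfl <;> rfl

theorem edges_separated {i j : Fin p} (hij : i ≠ j) (ab cd : Fin 3 × Fin 3) :
    ∀ x ∈ edge i ab, ∀ y ∈ edge j cd, x ≠ y ∧ ¬ (copiesK33 p).Adj x y := by
  intro x hx y hy
  have hxy : x.1 ≠ y.1 := by rwa [fst_eq_of_mem_edge hx, fst_eq_of_mem_edge hy]
  exact ⟨fun h => hxy (congrArg Prod.fst h), fun hadj => hxy hadj.1⟩

theorem _root_.IsInducedMatching.eq_of_edge_mem {M : Finset (Sym2 (Fin p × (Fin 3 ⊕ Fin 3)))}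
    (hM : IsInducedMatching (copiesK33 p) M) {i : Fin p} {ab cd : Fin 3 × Fin 3}
    (hab : edge i ab ∈ M) (hcd : edge i cd ∈ M) : ab = cd := by
  by_contra hne
  have hne' : edge i ab ≠ edge i cd := fun h => hne (edge_inj.mp h).2
  refine (hM.2 _ hab _ hcd hne' (i, Sum.inl ab.1) ?_ (i, Sum.inr cd.2) ?_).2 ⟨rfl, ?_⟩ <;>
    simp [edge]

def matchingOf (f : Fin p → Fin 3 × Fin 3) : Finset (Sym2 (Fin p × (Fin 3 ⊕ Fin 3))) :=
  Finset.univ.image fun i => edge i (f i)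

theorem mem_matchingOf {f : Fin p → Fin 3 × Fin 3} {e : Sym2 (Fin p × (Fin 3 ⊕ Fin 3))} :
    e ∈ matchingOf f ↔ ∃ i, e = edge i (f i) := by
  simp [matchingOf, eq_comm]

theorem edge_mem_matchingOf (f : Fin p → Fin 3 × Fin 3) (i : Fin p) :
    edge i (f i) ∈ matchingOf f :=
  mem_matchingOf.mpr ⟨i, rfl⟩

theorem matchingOf_injective : Function.Injective (matchingOf (p := p)) := by
  intro f g hfg
  funext i
  obtain ⟨j, hj⟩ := mem_matchingOf.mp (hfg ▸ edge_mem_matchingOf f i)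
  obtain ⟨rfl, h⟩ := edge_inj.mp hj
  exact h

theorem isInducedMatching_matchingOf (f : Fin p → Fin 3 × Fin 3) :
    IsInducedMatching (copiesK33 p) (matchingOf f) := by
  refine ⟨fun e he => ?_, fun e he e' he' hne => ?_⟩
  · obtain ⟨i, rfl⟩ := mem_matchingOf.mp he
    exact edge_mem_edgeSet i (f i)
  · obtain ⟨i, rfl⟩ := mem_matchingOf.mp he
    obtain ⟨j, rfl⟩ := mem_matchingOf.mp he'
    exact edges_separated (fun hij => hne (by rw [hij])) (f i) (f j)

theorem eq_matchingOf_of_forall_edge_mem {M : Finset (Sym2 (Fin p × (Fin 3 ⊕ Fin 3)))}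
    (hM : IsInducedMatching (copiesK33 p) M) {f : Fin p → Fin 3 × Fin 3}
    (hf : ∀ i, edge i (f i) ∈ M) : M = matchingOf f := by
  refine Finset.Subset.antisymm (fun e he => ?_) (fun e he => ?_)
  · obtain ⟨i, ab, rfl⟩ := mem_edgeSet_iff.mp (hM.1 e he)
    rw [hM.eq_of_edge_mem he (hf i)]
    exact edge_mem_matchingOf f i
  · obtain ⟨i, rfl⟩ := mem_matchingOf.mp he
    exact hf i

theorem isMaximalInducedMatching_matchingOf (f : Fin p → Fin 3 × Fin 3) :
    IsMaximalInducedMatching (copiesK33 p) (matchingOf f) :=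
  ⟨isInducedMatching_matchingOf f, fun _ hM' hsub =>
    eq_matchingOf_of_forall_edge_mem hM' fun i => hsub (edge_mem_matchingOf f i)⟩

theorem exists_edge_mem_of_isMaximal {M : Finset (Sym2 (Fin p × (Fin 3 ⊕ Fin 3)))}
    (hM : IsMaximalInducedMatching (copiesK33 p) M) (i : Fin p) : ∃ ab, edge i ab ∈ M := by
  by_contra! hnone
  have hsep :
      ∀ e ∈ M, ∀ x ∈ edge i (0, 0), ∀ y ∈ e, x ≠ y ∧ ¬ (copiesK33 p).Adj x y := by
    intro e he
    obtain ⟨j, cd, rfl⟩ := mem_edgeSet_iff.mp (hM.1.1 e he)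
    exact edges_separated (fun hij => hnone cd (by rwa [hij])) (0, 0) cd
  have hins := hM.2 _ (hM.1.insert (edge_mem_edgeSet i (0, 0)) hsep) (Finset.subset_insert _ _)
  exact hnone (0, 0) (hins ▸ Finset.mem_insert_self _ _)

theorem setOf_isMaximalInducedMatching :
    {M | IsMaximalInducedMatching (copiesK33 p) M} = Set.range (matchingOf (p := p)) := by
  ext M
  refine ⟨fun hM => ?_, ?_⟩
  · choose f hf using exists_edge_mem_of_isMaximal hM
    exact ⟨f, (eq_matchingOf_of_forall_edge_mem hM.1 hf).symm⟩
  · rintro ⟨f, rfl⟩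
    exact isMaximalInducedMatching_matchingOf f

end copiesK33

/-- The disjoint union of `p` copies of `K_{3,3}` (a graph on `n = 6p` vertices)
has exactly `3^(n/3)` maximal induced matchings. -/
theorem mimCount_copiesK33 (p : ℕ) :
    mimCount (copiesK33 p) = 3 ^ ((6 * p) / 3) := by
  rw [mimCount, copiesK33.setOf_isMaximalInducedMatching, ← Nat.card_coe_set_eq,
    Nat.card_range_of_injective copiesK33.matchingOf_injective]
  simp only [Nat.card_eq_fintype_card, Fintype.card_fun, Fintype.card_prod, Fintype.card_fin]
  rw [show 6 * p / 3 = 2 * p by omega, pow_mul]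
  norm_num
end

section
/- Let G be a finite simple graph and let u, v be vertices such that no maximal induced matching of G covers both u and v. Then |M_{G_{u→v}}| ≥ |M_G| or |M_{G_{v→u}}| ≥ |M_G|, where M_H denotes the set of maximal induced matchings of H. -/
/-- `G_{u→v}`: the graph obtained from `G` by making `u` into a (false) twin of `v`:
all edges not incident with `u` are kept, and the neighbourhood of `u` becomes that of `v`. -/
def moveTwin {V : Type*} (G : SimpleGraph V) (u v : V) : SimpleGraph V where
  Adj x y :=
    (x = u ∧ y ≠ u ∧ G.Adj v y) ∨ (y = u ∧ x ≠ u ∧ G.Adj v x) ∨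
      (x ≠ u ∧ y ≠ u ∧ G.Adj x y)
  symm := by
    constructor
    rintro x y (⟨h1, h2, h3⟩ | ⟨h1, h2, h3⟩ | ⟨h1, h2, h3⟩)
    · exact Or.inr (Or.inl ⟨h1, h2, h3⟩)
    · exact Or.inl ⟨h1, h2, h3⟩
    · exact Or.inr (Or.inr ⟨h2, h1, h3.symm⟩)
  loopless := by
    constructor
    rintro x (⟨h1, h2, _⟩ | ⟨h1, h2, _⟩ | ⟨_, _, h3⟩)
    exacts [h2 h1, h2 h1, G.ne_of_adj h3 rfl]


/-!
Sort the maximal induced matchings of `G` into the `a` covering neither `u` nor `v`, the `b`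
covering only `u` and the `c` covering only `v`; none covers both. Since `G_{u→v}` is the
pullback of `G` along `r = update id u v`, and an induced matching of a pullback `G.comap f`
pushes forward along `f` to an induced matching of `G`, every maximal induced matching of `G`
avoiding `u` stays maximal in `G_{u→v}`. As `u` and `v` are twins in `G_{u→v}`, swapping them is
an automorphism; it turns the `c` matchings covering `v` into further ones covering `u`. So
`G_{u→v}` has at least `a + 2c` maximal induced matchings, `G_{v→u}` at least `a + 2b`, and one
of them at least `a + b + c`.
-/

section Comap

variable {V W : Type*} {G : SimpleGraph W} {f : V → W} {M : Finset (Sym2 V)}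

theorem MCovers.image [DecidableEq W] {x : V} (hx : MCovers M x) :
    MCovers (M.image (Sym2.map f)) (f x) := by
  obtain ⟨e, he, hxe⟩ := hx
  exact ⟨_, Finset.mem_image_of_mem _ he, Sym2.mem_map.2 ⟨x, hxe, rfl⟩⟩

/-- Vertices with the same image under `f` are twins in `G.comap f`, and an induced matching
cannot cover two twins: the partner of one would be adjacent to the other. -/
theorem IsInducedMatching.injOn_comap (hM : IsInducedMatching (G.comap f) M) :
    Set.InjOn f {x | MCovers M x} := by
  rintro x ⟨e, he, hxe⟩ y ⟨d, hd, hyd⟩ hxy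
  by_contra hne
  obtain ⟨a, rfl⟩ := Sym2.mem_iff_exists.1 hxe
  have hxa : G.Adj (f x) (f a) := hM.1 _ he
  by_cases hed : s(x, a) = d
  · subst hed
    obtain rfl : y = a := (Sym2.mem_iff.1 hyd).resolve_left (Ne.symm hne)
    exact G.ne_of_adj (hxy ▸ hxa) rfl
  · exact (hM.2 _ hd _ he (Ne.symm hed) y hyd a (Sym2.mem_mk_right x a)).2
      (show G.Adj (f y) (f a) from hxy ▸ hxa)

theorem IsInducedMatching.image_comap [DecidableEq W] (hM : IsInducedMatching (G.comap f) M) :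
    IsInducedMatching G (M.image (Sym2.map f)) := by
  refine ⟨?_, ?_⟩
  · simp only [Finset.mem_image]
    rintro _ ⟨e, he, rfl⟩
    induction e using Sym2.ind with
    | _ a b => exact hM.1 _ he
  · simp only [Finset.mem_image]
    rintro _ ⟨e, he, rfl⟩ _ ⟨d, hd, rfl⟩ hed _ hx _ hy
    obtain ⟨x, hxe, rfl⟩ := Sym2.mem_map.1 hx
    obtain ⟨y, hyd, rfl⟩ := Sym2.mem_map.1 hy
    have hne : e ≠ d := by rintro rfl; exact hed rfl
    obtain ⟨hxy, hadj⟩ := hM.2 e he d hd hne x hxe y hyd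
    exact ⟨fun h => hxy (hM.injOn_comap ⟨e, he, hxe⟩ ⟨d, hd, hyd⟩ h), hadj⟩

end Comap

section FixingSupport

variable {V : Type*} {G : SimpleGraph V} {f : V → V} {M : Finset (Sym2 V)}

theorem image_sym2Map_eq_self [DecidableEq V] (hf : Set.EqOn f id {x | MCovers M x}) :
    M.image (Sym2.map f) = M := by
  conv_rhs => rw [← Finset.image_id (s := M), ← Sym2.map_id]
  exact Finset.image_congr fun e he => Sym2.map_congr fun x hx => hf ⟨e, he, hx⟩

theorem IsInducedMatching.comap_of_eqOn (hM : IsInducedMatching G M)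
    (hf : Set.EqOn f id {x | MCovers M x}) : IsInducedMatching (G.comap f) M := by
  refine ⟨fun e he => ?_, fun e he d hd hed x hx y hy => ?_⟩
  · induction e using Sym2.ind with
    | _ a b =>
      have ha : f a = a := hf ⟨_, he, Sym2.mem_mk_left a b⟩
      have hb : f b = b := hf ⟨_, he, Sym2.mem_mk_right a b⟩
      simpa [ha, hb] using hM.1 _ he
  · have hfx : f x = x := hf ⟨e, he, hx⟩
    have hfy : f y = y := hf ⟨d, hd, hy⟩
    simpa [hfx, hfy] using hM.2 e he d hd hed x hx y hy

end FixingSupport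

theorem IsMaximalInducedMatching.image_iso {V W : Type*} [DecidableEq W] {G : SimpleGraph V}
    {H : SimpleGraph W} (φ : G ≃g H) {M : Finset (Sym2 V)} (hM : IsMaximalInducedMatching G M) :
    IsMaximalInducedMatching H (M.image (Sym2.map φ)) := by
  classical
  have hG : H.comap φ = G := SimpleGraph.ext <| by ext; simp [φ.map_adj_iff]
  have hH : G.comap φ.symm = H := SimpleGraph.ext <| by ext; simp [← φ.map_adj_iff]
  have image_symm (N : Finset (Sym2 W)) :
      (N.image (Sym2.map φ.symm)).image (Sym2.map φ) = N := by
    simp [Finset.image_image, Function.comp_def, Sym2.map_map]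
  have symm_image : (M.image (Sym2.map φ)).image (Sym2.map φ.symm) = M := by
    simp [Finset.image_image, Function.comp_def, Sym2.map_map]
  have hM₁ : IsInducedMatching (H.comap φ) M := by rw [hG]; exact hM.1
  refine ⟨hM₁.image_comap, fun N hN hsub => ?_⟩
  have hN₁ : IsInducedMatching (G.comap φ.symm) N := by rwa [hH]
  rw [← image_symm N, hM.2 _ hN₁.image_comap (symm_image ▸ Finset.image_subset_image hsub)]

theorem mimCount_eq_ncard_add_ncard {V : Type*} [Finite V] (G : SimpleGraph V) (w : V) :
    mimCount G = {M | IsMaximalInducedMatching G M ∧ ¬ MCovers M w}.ncard +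
      {M | IsMaximalInducedMatching G M ∧ MCovers M w}.ncard := by
  rw [add_comm]
  exact (Set.ncard_inter_add_ncard_sdiff_eq_ncard _ _).symm

section MoveTwin

variable {V : Type*} [DecidableEq V] {G : SimpleGraph V} {u v : V}

theorem moveTwin_eq_comap : moveTwin G u v = G.comap (Function.update id u v) := by
  ext x y
  by_cases hx : x = u <;> by_cases hy : y = u <;>
    simp [moveTwin, hx, hy, G.adj_comm]

theorem update_id_swap_apply (x : V) :
    Function.update id u v (Equiv.swap u v x) = Function.update id u v x := by
  rcases eq_or_ne x u with rfl | hxu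
  · simp [Function.update_apply]
  rcases eq_or_ne x v with rfl | hxv
  · simp [Function.update_apply]
  · rw [Equiv.swap_apply_of_ne_of_ne hxu hxv]

def moveTwinSwap (G : SimpleGraph V) (u v : V) : moveTwin G u v ≃g moveTwin G u v where
  toEquiv := Equiv.swap u v
  map_rel_iff' := by
    intro x y
    simp only [moveTwin_eq_comap, SimpleGraph.comap_adj, update_id_swap_apply]

theorem IsMaximalInducedMatching.moveTwin {M : Finset (Sym2 V)}
    (hM : IsMaximalInducedMatching G M) (hu : ¬ MCovers M u) :
    IsMaximalInducedMatching (moveTwin G u v) M := by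
  set r := Function.update id u v
  have hr : Set.EqOn r id {x | MCovers M x} := fun x hx =>
    Function.update_of_ne (by rintro rfl; exact hu hx) _ _
  rw [moveTwin_eq_comap]
  refine ⟨hM.1.comap_of_eqOn hr, fun N hN hMN => subset_antisymm (fun e he => ?_) hMN⟩
  have hrN : N.image (Sym2.map r) = M :=
    hM.2 _ hN.image_comap (image_sym2Map_eq_self hr ▸ Finset.image_subset_image hMN)
  have hre : Sym2.map r e ∈ M := hrN ▸ Finset.mem_image_of_mem _ he
  by_cases hue : u ∈ e
  · -- `r e ∈ M` covers `v`, so `N` covers both `u` and `v`, which have the same image under `r`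
    obtain ⟨d, hd, hvd⟩ : MCovers M v :=
      ⟨_, hre, Sym2.mem_map.2 ⟨u, hue, Function.update_self _ _ _⟩⟩
    have huv : u = v :=
      hN.injOn_comap ⟨e, he, hue⟩ ⟨d, hMN hd, hvd⟩ (by simp [Function.update_apply])
    exact absurd ⟨d, hd, huv ▸ hvd⟩ hu
  · have hre_eq : Sym2.map r e = Sym2.map id e :=
      Sym2.map_congr fun x hx => Function.update_of_ne (ne_of_mem_of_not_mem hx hue) _ _
    rwa [hre_eq, Sym2.map_id, id] at hre

end MoveTwin

theorem ncard_add_ncard_le_mimCount_moveTwin {V : Type*} [Finite V] (G : SimpleGraph V)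
    (u v : V) :
    {M | IsMaximalInducedMatching G M ∧ ¬ MCovers M u}.ncard +
        {M | IsMaximalInducedMatching G M ∧ MCovers M v ∧ ¬ MCovers M u}.ncard ≤
      mimCount (moveTwin G u v) := by
  classical
  set S := {M | IsMaximalInducedMatching (moveTwin G u v) M}
  set C := {M : Finset (Sym2 V) | MCovers M u}
  set σ := moveTwinSwap G u v
  have hA : {M | IsMaximalInducedMatching G M ∧ ¬ MCovers M u} ⊆ S \ C :=
    fun M hM => ⟨hM.1.moveTwin hM.2, hM.2⟩
  have hB : Finset.image (Sym2.map σ) ''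
      {M | IsMaximalInducedMatching G M ∧ MCovers M v ∧ ¬ MCovers M u} ⊆ S ∩ C := by
    rintro _ ⟨M, ⟨hM, hv, hu⟩, rfl⟩
    refine ⟨(hM.moveTwin hu).image_iso σ, ?_⟩
    have hσv : σ v = u := Equiv.swap_apply_right u v
    simpa only [C, Set.mem_ofPred_eq, hσv] using hv.image (f := σ)
  have hσ_inj : Function.Injective (Finset.image (Sym2.map σ)) :=
    Finset.image_injective (Sym2.map.injective σ.injective)
  calc _ = _ + (Finset.image (Sym2.map σ) '' _).ncard := by
        rw [Set.ncard_image_of_injective _ hσ_inj]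
    _ ≤ (S \ C).ncard + (S ∩ C).ncard :=
        add_le_add (Set.ncard_le_ncard hA) (Set.ncard_le_ncard hB)
    _ = mimCount (moveTwin G u v) := by
        rw [add_comm]; exact Set.ncard_inter_add_ncard_sdiff_eq_ncard S C

/-- If no maximal induced matching of `G` covers both `u` and `v`, then
`|M_{G_{u→v}}| ≥ |M_G|` or `|M_{G_{v→u}}| ≥ |M_G|`. -/
theorem mimCount_moveTwin {V : Type*} [Fintype V] (G : SimpleGraph V) (u v : V)
    (h : ∀ M : Finset (Sym2 V), IsMaximalInducedMatching G M →
      ¬ (MCovers M u ∧ MCovers M v)) :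
    mimCount G ≤ mimCount (moveTwin G u v) ∨ mimCount G ≤ mimCount (moveTwin G v u) := by
  have covers_only {x y : V} (hxy : ∀ M, IsMaximalInducedMatching G M → MCovers M x →
      ¬ MCovers M y) : {M | IsMaximalInducedMatching G M ∧ MCovers M x ∧ ¬ MCovers M y} =
        {M | IsMaximalInducedMatching G M ∧ MCovers M x} :=
    Set.ext fun M => ⟨fun hM => ⟨hM.1, hM.2.1⟩, fun hM => ⟨hM.1, hM.2, hxy M hM.1 hM.2⟩⟩
  have huv := ncard_add_ncard_le_mimCount_moveTwin G u v
  have hvu := ncard_add_ncard_le_mimCount_moveTwin G v u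
  rw [covers_only fun M hM hv hu => h M hM ⟨hu, hv⟩] at huv
  rw [covers_only fun M hM hu hv => h M hM ⟨hu, hv⟩] at hvu
  have := mimCount_eq_ncard_add_ncard G u
  have := mimCount_eq_ncard_add_ncard G v
  omega
end

section
/- Let G be a triangle-free finite simple graph and let u, v be non-adjacent vertices of G. Then the graph G_{T(u)→v}, obtained by making every vertex in the twin set of u into a twin of v, is triangle-free. -/
/-- The twin set of `u`: all vertices with the same open neighbourhood as `u`. -/
def twinSet {V : Type*} (G : SimpleGraph V) (u : V) : Set V :=
  {w | G.neighborSet w = G.neighborSet u}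

/-- `G_{T(u)→v}`: the graph obtained from `G` by making every vertex of the twin set
of `u` into a (false) twin of `v` (for non-adjacent `u`, `v`). -/
def moveTwinSetGraph {V : Type*} (G : SimpleGraph V) (u v : V) : SimpleGraph V where
  Adj x y :=
    (x ∈ twinSet G u ∧ y ∉ twinSet G u ∧ G.Adj v y) ∨
      (y ∈ twinSet G u ∧ x ∉ twinSet G u ∧ G.Adj v x) ∨
      (x ∉ twinSet G u ∧ y ∉ twinSet G u ∧ G.Adj x y)
  symm := by
    constructor
    rintro x y (⟨h1, h2, h3⟩ | ⟨h1, h2, h3⟩ | ⟨h1, h2, h3⟩)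
    · exact Or.inr (Or.inl ⟨h1, h2, h3⟩)
    · exact Or.inl ⟨h1, h2, h3⟩
    · exact Or.inr (Or.inr ⟨h2, h1, h3.symm⟩)
  loopless := by
    constructor
    rintro x (⟨h1, h2, _⟩ | ⟨h1, h2, _⟩ | ⟨_, _, h3⟩)
    exacts [h2 h1, h2 h1, G.loopless.irrefl x h3]

/-! Sending every vertex of `T(u)` to `v` and fixing all other vertices is a homomorphism
`G_{T(u)→v} →g G`: in `G_{T(u)→v}` the set `T(u)` is independent and its vertices are adjacent
exactly to the neighbours of `v` outside `T(u)`. A homomorphism is injective on cliques, so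
it pulls back triangle-freeness. -/

namespace SimpleGraph

variable {α β : Type*} {H : SimpleGraph α} {G : SimpleGraph β}

theorem CliqueFree.of_hom {n : ℕ} (f : H →g G) (h : G.CliqueFree n) : H.CliqueFree n := by
  contrapose h
  rw [not_cliqueFree_iff_top_isContained] at h ⊢
  obtain ⟨c⟩ := h
  let k : completeGraph (Fin n) →g G := f.comp c.toHom
  exact (k.toCopy k.injective_of_top_hom).isContained

end SimpleGraph

open Classical in
noncomputable def collapseTwinSet {V : Type*} (G : SimpleGraph V) (u v : V) :
    moveTwinSetGraph G u v →g G where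
  toFun x := if x ∈ twinSet G u then v else x
  map_rel' := by
    rintro x y (⟨hx, hy, hvy⟩ | ⟨hy, hx, hvx⟩ | ⟨hx, hy, hxy⟩)
    · simpa [hx, hy] using hvy
    · simpa [hx, hy] using hvx.symm
    · simpa [hx, hy] using hxy

theorem moveTwinSetGraph_triangleFree_general {V : Type*} (G : SimpleGraph V) (u v : V)
    (hG : G.CliqueFree 3) :
    (moveTwinSetGraph G u v).CliqueFree 3 :=
  hG.of_hom (collapseTwinSet G u v)

/-- If `G` is triangle-free and `u`, `v` are non-adjacent, then `G_{T(u)→v}` is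
triangle-free. -/
theorem moveTwinSetGraph_triangleFree {V : Type*} (G : SimpleGraph V) (u v : V)
    (hG : G.CliqueFree 3) (huv : ¬ G.Adj u v) :
    (moveTwinSetGraph G u v).CliqueFree 3 :=
  moveTwinSetGraph_triangleFree_general G u v hG
end

section
/- Let G be a triangle-free finite simple graph and let u, v be non-adjacent vertices that are not twins. Then the number of twin sets of G_{T(u)→v} is strictly smaller than the number of twin sets of G. -/
/-- The number of twin sets (classes of the twin equivalence) of `G`. -/
noncomputable def twinClassCount {V : Type*} (G : SimpleGraph V) : ℕ :=
  {S : Set V | ∃ w, S = twinSet G w}.ncard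

/-! Twins of `G` remain twins in `G_{T(u)→v}`, so the twin partition of the new graph is coarser
than that of `G`; since `u` and `v` are not twins in `G` but become twins, it is strictly coarser,
and a strictly coarser partition of a finite set has fewer classes. -/

open Set Function in
theorem Set.ncard_range_lt_of_factors_through {α β γ : Type*} [Finite α] {f : α → β} {g : α → γ}
    (hfg : ∀ x y, f x = f y → g x = g y) {x y : α} (hg : g x = g y) (hf : f x ≠ f y) :
    (range g).ncard < (range f).ncard := by
  classical
  have : Nonempty α := ⟨x⟩
  let φ : β → γ := fun b ↦ g (invFun f b)
  have hφ : ∀ a, φ (f a) = g a := fun a ↦ hfg _ _ (invFun_eq ⟨a, rfl⟩)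
  have hrange : range g = φ '' range f := by
    rw [← range_comp]
    exact congrArg range (funext fun a ↦ (hφ a).symm)
  have hnotInj : ¬ InjOn φ (range f) := fun hinj ↦
    hf (hinj (mem_range_self x) (mem_range_self y) ((hφ x).trans (hg.trans (hφ y).symm)))
  rw [hrange]
  exact lt_of_le_of_ne (ncard_image_le (toFinite _)) (mt (ncard_image_iff (toFinite _)).1 hnotInj)

section twins

variable {V : Type*} (G : SimpleGraph V)

theorem twinSet_eq_twinSet_iff {x y : V} :
    twinSet G x = twinSet G y ↔ G.neighborSet x = G.neighborSet y :=
  ⟨fun h ↦ (h ▸ rfl : x ∈ twinSet G y), fun h ↦ by rw [twinSet, twinSet, h]⟩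

theorem twinClassCount_eq_ncard_range : twinClassCount G = (Set.range (twinSet G)).ncard := by
  simp only [twinClassCount, Set.range, eq_comm]

variable (u v : V)

theorem moveTwinSetGraph_neighborSet_eq_of_neighborSet_eq {x y : V}
    (h : G.neighborSet x = G.neighborSet y) :
    (moveTwinSetGraph G u v).neighborSet x = (moveTwinSetGraph G u v).neighborSet y := by
  have hT : x ∈ twinSet G u ↔ y ∈ twinSet G u := by
    change G.neighborSet x = _ ↔ G.neighborSet y = _
    rw [h]
  have hv : G.Adj v x ↔ G.Adj v y := by
    rw [G.adj_comm v, G.adj_comm v, ← SimpleGraph.mem_neighborSet, h, SimpleGraph.mem_neighborSet]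
  ext z
  have hz : G.Adj x z ↔ G.Adj y z := by
    rw [← SimpleGraph.mem_neighborSet, h, SimpleGraph.mem_neighborSet]
  simp only [SimpleGraph.mem_neighborSet, moveTwinSetGraph]
  tauto

theorem moveTwinSetGraph_neighborSet_left_eq_right :
    (moveTwinSetGraph G u v).neighborSet u = (moveTwinSetGraph G u v).neighborSet v := by
  have hu : u ∈ twinSet G u := rfl
  ext z
  simp only [SimpleGraph.mem_neighborSet, moveTwinSetGraph]
  by_cases hv : v ∈ twinSet G u <;> simp [hu, hv]

end twins

theorem twinClassCount_moveTwinSetGraph_general {V : Type*} [Fintype V] (G : SimpleGraph V)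
    (u v : V)
    (hnt : G.neighborSet u ≠ G.neighborSet v) :
    twinClassCount (moveTwinSetGraph G u v) < twinClassCount G := by
  rw [twinClassCount_eq_ncard_range, twinClassCount_eq_ncard_range]
  refine Set.ncard_range_lt_of_factors_through (fun x y h ↦ ?_) (x := u) (y := v) ?_ ?_
  · rw [twinSet_eq_twinSet_iff] at h ⊢
    exact moveTwinSetGraph_neighborSet_eq_of_neighborSet_eq G u v h
  · rw [twinSet_eq_twinSet_iff]
    exact moveTwinSetGraph_neighborSet_left_eq_right G u v
  · rwa [Ne, twinSet_eq_twinSet_iff]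

/-- If `G` is triangle-free and `u`, `v` are non-adjacent non-twins, then
`G_{T(u)→v}` has strictly fewer twin sets than `G`. -/
theorem twinClassCount_moveTwinSetGraph {V : Type*} [Fintype V] (G : SimpleGraph V)
    (u v : V) (hG : G.CliqueFree 3) (huv : ¬ G.Adj u v)
    (hnt : G.neighborSet u ≠ G.neighborSet v) :
    twinClassCount (moveTwinSetGraph G u v) < twinClassCount G :=
  twinClassCount_moveTwinSetGraph_general G u v hnt
end
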